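/- arXiv:1406.4722 — 2 statements merged into one kernel-verified Lean document; each statement's English description precedes it below -/
import Mathlib

section
/- Let n ≥ 1. In the quotient ring (ℤ/2)[t₁,…,tₙ]/𝒯ₙ the following identity holds: (∏_{j=1}^{n−1} (1 + t_j)) · (∏_{j=1}^{n−1} (1 + t_j + t_j² + ⋯ + t_j^{j})) = 1. In particular ∏_{j=1}^{n−1}(1+t_j) is a unit of the quotient ring with inverse ∏_{j=1}^{n−1} (1 + t_j + ⋯ + t_j^{j}). -/
/-!
Modulo `𝒯ₙ` the relations read `t₀² = 0` and `tᵢ² = tᵢ₋₁ tᵢ`, so `tᵢ^(m+1) = tᵢ₋₁^m tᵢ`, and by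
induction `tᵢ^(i+2) = 0`. In characteristic 2 the geometric sum gives
`(1 + t) (1 + t + ⋯ + t^(k-1)) = 1 + t^k`, which is `1` for `t = tᵢ`, `k = i + 2`.
-/

open MvPolynomial

/-- The ideal 𝒯ₙ ⊆ (ℤ/2)[t₁,…,tₙ] generated by t₁² and t_i² + t_{i−1}·t_i for 2 ≤ i ≤ n
(zero-based indexing). -/
noncomputable def Tideal (n : ℕ) : Ideal (MvPolynomial (Fin n) (ZMod 2)) :=
  Ideal.span (Set.range fun i : Fin n =>
    X i ^ 2 +
      if (i : ℕ) = 0 then 0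
      else X (⟨(i : ℕ) - 1, Nat.lt_of_le_of_lt (Nat.sub_le _ _) i.isLt⟩ : Fin n) * X i)

theorem one_add_mul_geom_sum {R : Type*} [Ring R] [CharP R 2] (x : R) (k : ℕ) :
    (1 + x) * ∑ e ∈ Finset.range k, x ^ e = 1 + x ^ k := by
  simpa only [CharTwo.sub_eq_add] using mul_neg_geom_sum x k

theorem pow_succ_eq_pow_mul_of_sq_eq_mul {M : Type*} [CommMonoid M] {a b : M}
    (h : b ^ 2 = a * b) (m : ℕ) : b ^ (m + 1) = a ^ m * b := by
  induction m with
  | zero => simp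
  | succ m ih =>
    calc b ^ (m + 1 + 1) = a ^ m * b ^ 2 := by rw [pow_succ, ih, mul_assoc, sq]
      _ = a ^ (m + 1) * b := by rw [h, pow_succ, mul_assoc]

namespace Tideal

variable {n : ℕ}

theorem generator_mem (i : Fin n) :
    X i ^ 2 +
        (if (i : ℕ) = 0 then 0
        else X (⟨(i : ℕ) - 1, Nat.lt_of_le_of_lt (Nat.sub_le _ _) i.isLt⟩ : Fin n) * X i)
      ∈ Tideal n :=
  Ideal.subset_span ⟨i, rfl⟩

theorem mk_X_sq_of_val_eq_zero {i : Fin n} (hi : (i : ℕ) = 0) :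
    Ideal.Quotient.mk (Tideal n) (X i) ^ 2 = 0 := by
  rw [← map_pow, Ideal.Quotient.eq_zero_iff_mem]
  simpa only [hi, if_true, add_zero] using generator_mem i

theorem mk_X_sq_of_val_eq_succ {i j : Fin n} (hij : (i : ℕ) = j + 1) :
    Ideal.Quotient.mk (Tideal n) (X i) ^ 2 =
      Ideal.Quotient.mk (Tideal n) (X j) * Ideal.Quotient.mk (Tideal n) (X i) := by
  have hpred : (⟨(i : ℕ) - 1, Nat.lt_of_le_of_lt (Nat.sub_le _ _) i.isLt⟩ : Fin n) = j :=
    Fin.ext (by simp only [hij, Nat.add_sub_cancel])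
  rw [← map_pow, ← map_mul, Ideal.Quotient.eq, CharTwo.sub_eq_add]
  have h := generator_mem i
  rwa [if_neg (by omega), hpred] at h

theorem mk_X_pow_eq_zero : ∀ (k : ℕ) (i : Fin n), (i : ℕ) = k →
    Ideal.Quotient.mk (Tideal n) (X i) ^ (k + 2) = 0
  | 0, _, hi => mk_X_sq_of_val_eq_zero hi
  | k + 1, i, hi => by
    let j : Fin n := ⟨k, by omega⟩
    rw [pow_succ_eq_pow_mul_of_sq_eq_mul (mk_X_sq_of_val_eq_succ (j := j) hi),
      mk_X_pow_eq_zero k j rfl, zero_mul]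

end Tideal

theorem stmt1_general (n : ℕ) :
    Ideal.Quotient.mk (Tideal n)
        ((∏ i ∈ Finset.univ.filter (fun i : Fin n => (i : ℕ) < n - 1), (1 + X i)) *
          (∏ i ∈ Finset.univ.filter (fun i : Fin n => (i : ℕ) < n - 1),
            ∑ e ∈ Finset.range ((i : ℕ) + 2), X i ^ e)) = 1 ∧
    IsUnit (Ideal.Quotient.mk (Tideal n)
        (∏ i ∈ Finset.univ.filter (fun i : Fin n => (i : ℕ) < n - 1), (1 + X i))) := by
  have inverse : Ideal.Quotient.mk (Tideal n)
      ((∏ i ∈ Finset.univ.filter (fun i : Fin n => (i : ℕ) < n - 1), (1 + X i)) *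
        (∏ i ∈ Finset.univ.filter (fun i : Fin n => (i : ℕ) < n - 1),
          ∑ e ∈ Finset.range ((i : ℕ) + 2), X i ^ e)) = 1 := by
    rw [← Finset.prod_mul_distrib, map_prod]
    refine Finset.prod_eq_one fun i _ => ?_
    rw [one_add_mul_geom_sum, map_add, map_one, map_pow, Tideal.mk_X_pow_eq_zero _ i rfl,
      add_zero]
  exact ⟨inverse, IsUnit.of_mul_eq_one _ ((map_mul _ _ _).symm.trans inverse)⟩

/-- In `(ℤ/2)[t₁,…,tₙ]/𝒯ₙ` we have
`(∏_{j=1}^{n−1} (1+t_j)) · (∏_{j=1}^{n−1} (1+t_j+⋯+t_j^j)) = 1`; in particular,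
`∏_{j=1}^{n−1}(1+t_j)` is a unit of the quotient ring.
(In zero-based indexing, `t_j` for `1 ≤ j ≤ n−1` corresponds to `X i` with `i < n−1`, and
`1 + t_j + ⋯ + t_j^j` becomes `∑_{e < i+2} (X i)^e`.) -/
theorem stmt1 (n : ℕ) (hn : 1 ≤ n) :
    Ideal.Quotient.mk (Tideal n)
        ((∏ i ∈ Finset.univ.filter (fun i : Fin n => (i : ℕ) < n - 1), (1 + X i)) *
          (∏ i ∈ Finset.univ.filter (fun i : Fin n => (i : ℕ) < n - 1),
            ∑ e ∈ Finset.range ((i : ℕ) + 2), X i ^ e)) = 1 ∧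
    IsUnit (Ideal.Quotient.mk (Tideal n)
        (∏ i ∈ Finset.univ.filter (fun i : Fin n => (i : ℕ) < n - 1), (1 + X i))) :=
  stmt1_general n
end

section
/- Let n ≥ 1 and let P ∈ (ℤ/2)[t₁,…,tₙ] be a polynomial all of whose monomials are square-free and such that P(1,1,…,1) = 1 in ℤ/2 (i.e., P has an odd number of monomials). Then P does not lie in the ideal 𝒯ₙ; equivalently, the image of P in (ℤ/2)[t₁,…,tₙ]/𝒯ₙ is nonzero. -/
/-!
Call an exponent vector `m` *admissible* if `m₁ + ⋯ + m_j ≤ j` for every `j`, and let `L` be the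
`ℤ/2`-linear functional counting the admissible monomials of a polynomial. A multiple of `t₁²`
has no admissible monomial, and the rewriting `t_i² ↦ t_{i-1} t_i` preserves admissibility,
so `L` vanishes on `𝒯ₙ`. Square-free monomials are admissible, so for such `P` we get
`L P = P(1, …, 1) = 1`.
-/

open MvPolynomial

open Finset

section

variable {σ R M : Type*} [CommSemiring R] [AddCommMonoid M] [Module R M]

theorem LinearMap.map_mul_eq_zero_of_monomial_mul (L : MvPolynomial σ R →ₗ[R] M)
    {g : MvPolynomial σ R} (hg : ∀ a, L (monomial a 1 * g) = 0) (c : MvPolynomial σ R) :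
    L (c * g) = 0 := by
  induction c using MvPolynomial.induction_on' with
  | monomial a r =>
    rw [show monomial a r = r • monomial a 1 by rw [smul_monomial, smul_eq_mul, mul_one],
      smul_mul_assoc, map_smul, hg, smul_zero]
  | add p q hp hq => rw [add_mul, map_add, hp, hq, add_zero]

theorem LinearMap.map_eq_zero_of_mem_span (L : MvPolynomial σ R →ₗ[R] M)
    {S : Set (MvPolynomial σ R)} (hS : ∀ g ∈ S, ∀ a, L (monomial a 1 * g) = 0)
    {p : MvPolynomial σ R} (hp : p ∈ Ideal.span S) : L p = 0 := by
  suffices ∀ c, L (c * p) = 0 by simpa using this 1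
  induction hp using Submodule.span_induction with
  | mem g hg => exact L.map_mul_eq_zero_of_monomial_mul (hS g hg)
  | zero => simp
  | add x y _ _ hx hy => intro c; rw [mul_add, map_add, hx, hy, add_zero]
  | smul d x _ hx => intro c; rw [smul_eq_mul, ← mul_assoc, hx]

end

variable {n : ℕ}

def prefixSum (j : Fin n) (m : Fin n →₀ ℕ) : ℕ := ∑ l ∈ Iic j, m l

theorem prefixSum_add (j : Fin n) (a b : Fin n →₀ ℕ) :
    prefixSum j (a + b) = prefixSum j a + prefixSum j b := by
  simp [prefixSum, sum_add_distrib]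

theorem prefixSum_single (j i : Fin n) (k : ℕ) :
    prefixSum j (Finsupp.single i k) = if i ≤ j then k else 0 := by
  simp [prefixSum, Finsupp.single_apply]

theorem prefixSum_mono {j j' : Fin n} (h : j ≤ j') (m : Fin n →₀ ℕ) :
    prefixSum j m ≤ prefixSum j' m :=
  sum_le_sum_of_subset (Iic_subset_Iic.mpr h)

/-- With zero-based indices: `m₀ + ⋯ + m_j ≤ j + 1` for all `j`. -/
def Admissible (m : Fin n →₀ ℕ) : Prop := ∀ j : Fin n, prefixSum j m ≤ j + 1

theorem admissible_of_le_one {m : Fin n →₀ ℕ} (h : ∀ j, m j ≤ 1) : Admissible m := fun j =>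
  calc prefixSum j m ≤ ∑ _l ∈ Iic j, 1 := sum_le_sum fun l _ => h l
    _ = j + 1 := by rw [sum_const, smul_eq_mul, mul_one, Fin.card_Iic]

theorem not_admissible_add_single_two (a : Fin n →₀ ℕ) {i : Fin n} (hi : (i : ℕ) = 0) :
    ¬ Admissible (a + Finsupp.single i 2) := fun h => by
  have := h i
  rw [prefixSum_add, prefixSum_single, if_pos le_rfl] at this
  omega

theorem admissible_add_single_two_iff (a : Fin n →₀ ℕ) {i' i : Fin n} (hi : (i' : ℕ) + 1 = i) :
    Admissible (a + Finsupp.single i 2) ↔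
      Admissible (a + (Finsupp.single i' 1 + Finsupp.single i 1)) := by
  simp only [Admissible, prefixSum_add, prefixSum_single, Fin.le_def]
  constructor
  · intro h j
    have hj := h j
    by_cases hji : j = i'
    · -- only the prefix sum at `i'` grows; bound it through the one at `i`
      have hi' := h i
      have := prefixSum_mono (show i' ≤ i from Fin.le_def.mpr (by omega)) a
      subst hji
      split_ifs at * <;> omega
    · have := Fin.val_ne_of_ne hji
      split_ifs at * <;> omega
  · intro h j
    have := h j
    split_ifs at * <;> omega

instance : DecidablePred (Admissible (n := n)) := fun _ => Fintype.decidableForallFintype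

noncomputable def admissibleCount : MvPolynomial (Fin n) (ZMod 2) →ₗ[ZMod 2] ZMod 2 :=
  (basisMonomials (Fin n) (ZMod 2)).constr (ZMod 2) fun m => if Admissible m then 1 else 0

theorem admissibleCount_monomial (m : Fin n →₀ ℕ) (c : ZMod 2) :
    admissibleCount (monomial m c) = if Admissible m then c else 0 := by
  have hbasis : admissibleCount (monomial m (1 : ZMod 2)) = if Admissible m then 1 else 0 :=
    (basisMonomials _ _).constr_basis (ZMod 2) _ m
  rw [show monomial m c = c • monomial m 1 by rw [smul_monomial, smul_eq_mul, mul_one], map_smul,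
    hbasis, smul_eq_mul, mul_ite, mul_one, mul_zero]

theorem admissibleCount_eq_eval_one {p : MvPolynomial (Fin n) (ZMod 2)}
    (hp : ∀ m ∈ p.support, Admissible m) : admissibleCount p = eval 1 p := by
  rw [admissibleCount, Module.Basis.constr_apply, eval_eq]
  refine sum_congr rfl fun m hm => ?_
  simp only [hp m hm, if_true, smul_eq_mul, mul_one, Pi.one_apply, one_pow, prod_const_one]
  rfl

theorem admissibleCount_eq_zero_of_mem_Tideal {p : MvPolynomial (Fin n) (ZMod 2)}
    (hp : p ∈ Tideal n) : admissibleCount p = 0 := by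
  refine admissibleCount.map_eq_zero_of_mem_span ?_ hp
  rintro _ ⟨i, rfl⟩ a
  dsimp only
  split_ifs with hi
  · rw [add_zero, X_pow_eq_monomial, monomial_mul, one_mul, admissibleCount_monomial,
      if_neg (not_admissible_add_single_two a hi)]
  · rw [X_pow_eq_monomial, X, X, monomial_mul, mul_add, monomial_mul, monomial_mul, one_mul,
      one_mul, map_add, admissibleCount_monomial, admissibleCount_monomial]
    simp only [admissible_add_single_two_iff a (i' := ⟨i - 1, by omega⟩) (i := i) (by simp; omega)]
    exact CharTwo.add_self_eq_zero _

theorem stmt8_general (n : ℕ) (P : MvPolynomial (Fin n) (ZMod 2))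
    (hsf : ∀ m ∈ P.support, ∀ j, m j ≤ 1)
    (hodd : eval (fun _ : Fin n => (1 : ZMod 2)) P = 1) :
    P ∉ Tideal n := fun hP => by
  have hcount : admissibleCount P = 1 :=
    (admissibleCount_eq_eval_one fun m hm => admissible_of_le_one (hsf m hm)).trans hodd
  exact one_ne_zero (hcount.symm.trans (admissibleCount_eq_zero_of_mem_Tideal hP))

/-- If all monomials of `P ∈ (ℤ/2)[t₁,…,tₙ]` are square-free and `P(1,…,1) = 1` (i.e. `P`
has an odd number of monomials), then `P ∉ 𝒯ₙ`; equivalently, the image of `P` in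
`(ℤ/2)[t₁,…,tₙ]/𝒯ₙ` is nonzero. -/
theorem stmt8 (n : ℕ) (hn : 1 ≤ n) (P : MvPolynomial (Fin n) (ZMod 2))
    (hsf : ∀ m ∈ P.support, ∀ j, m j ≤ 1)
    (hodd : eval (fun _ : Fin n => (1 : ZMod 2)) P = 1) :
    P ∉ Tideal n :=
  stmt8_general n P hsf hodd
end
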